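/- For t → 0⁺, the series F(t) = Σ_{k=0}^∞ (2k+1) e^{-k(k+1)t} satisfies the asymptotic expansion F(t) = t⁻¹ + 1/3 + t/15 + O(t²). -/

import Mathlib

open Real Filter Topology Asymptotics


open Real Filter Topology Asymptotics MeasureTheory Set

namespace ThetaAux

noncomputable def g (t x : ℝ) : ℝ := Real.exp (-((x ^ 2 + x) * t))

noncomputable def f0 (t x : ℝ) : ℝ := (2*x+1) * g t x
noncomputable def f1 (t x : ℝ) : ℝ := (2 - (2*x+1)^2*t) * g t x
noncomputable def f2 (t x : ℝ) : ℝ := (-6*(2*x+1)*t + (2*x+1)^3*t^2) * g t x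
noncomputable def f3 (t x : ℝ) : ℝ := (-12*t + 12*(2*x+1)^2*t^2 - (2*x+1)^4*t^3) * g t x
noncomputable def f4 (t x : ℝ) : ℝ := (60*(2*x+1)*t^2 - 20*(2*x+1)^3*t^3 + (2*x+1)^5*t^4) * g t x
noncomputable def f5 (t x : ℝ) : ℝ :=
  (120*t^2 - 180*(2*x+1)^2*t^3 + 30*(2*x+1)^4*t^4 - (2*x+1)^6*t^5) * g t x
noncomputable def f6 (t x : ℝ) : ℝ :=
  (-840*(2*x+1)*t^3 + 420*(2*x+1)^3*t^4 - 42*(2*x+1)^5*t^5 + (2*x+1)^7*t^6) * g t x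
noncomputable def h6 (t x : ℝ) : ℝ :=
  (840*(2*x+1)*t^3 + 420*(2*x+1)^3*t^4 + 42*(2*x+1)^5*t^5 + (2*x+1)^7*t^6) * g t x
noncomputable def G6 (t x : ℝ) : ℝ :=
  -((t^5*(4*(x^2+x)+1)^3 + 54*t^4*(4*(x^2+x)+1)^2 + 852*t^3*(4*(x^2+x)+1) + 4248*t^2) * g t x)
noncomputable def A0 (t x : ℝ) : ℝ := -(g t x / t)

noncomputable def P1 (y : ℝ) : ℝ := y - 1/2
noncomputable def P2 (y : ℝ) : ℝ := y^2/2 - y/2 + 1/12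
noncomputable def P3 (y : ℝ) : ℝ := y^3/6 - y^2/4 + y/12
noncomputable def P4 (y : ℝ) : ℝ := y^4/24 - y^3/12 + y^2/24 - 1/720
noncomputable def P5 (y : ℝ) : ℝ := y^5/120 - y^4/48 + y^3/72 - y/720
noncomputable def P6 (y : ℝ) : ℝ := y^6/720 - y^5/240 + y^4/288 - y^2/1440 + 1/30240

noncomputable def W (t c x : ℝ) : ℝ :=
  P1 (x-c) * f0 t x - P2 (x-c) * f1 t x + P3 (x-c) * f2 t x - P4 (x-c) * f3 t x
    + P5 (x-c) * f4 t x - P6 (x-c) * f5 t x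

lemma hd_poly7 (a0 a1 a2 a3 a4 a5 a6 a7 x : ℝ) :
    HasDerivAt (fun y : ℝ => a0 + a1*y + a2*y^2 + a3*y^3 + a4*y^4 + a5*y^5 + a6*y^6 + a7*y^7)
      (a1 + 2*a2*x + 3*a3*x^2 + 4*a4*x^3 + 5*a5*x^4 + 6*a6*x^5 + 7*a7*x^6) x := by
  have h := (((((((hasDerivAt_const x a0).add ((hasDerivAt_id x).const_mul a1)).add
    ((hasDerivAt_pow 2 x).const_mul a2)).add ((hasDerivAt_pow 3 x).const_mul a3)).add
    ((hasDerivAt_pow 4 x).const_mul a4)).add ((hasDerivAt_pow 5 x).const_mul a5)).add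
    ((hasDerivAt_pow 6 x).const_mul a6)).add ((hasDerivAt_pow 7 x).const_mul a7)
  refine h.congr_deriv ?_
  push_cast
  ring

lemma hd_congr {q r : ℝ → ℝ} {d e : ℝ} {x : ℝ} (h : HasDerivAt q d x)
    (hq : ∀ y, r y = q y) (he : e = d) : HasDerivAt r e x := by
  have h2 : r = q := funext hq
  rw [h2, he]; exact h

lemma hasDerivAt_g (t x : ℝ) : HasDerivAt (g t) (-((2*x+1)*t) * g t x) x := by
  have h1 : HasDerivAt (fun y : ℝ => -((y^2 + y) * t)) (-((2*x+1)*t)) x := by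
    have h2 := (((hasDerivAt_pow 2 x).add (hasDerivAt_id x)).mul_const t).neg
    refine h2.congr_deriv ?_
    push_cast
    ring
  exact hd_congr h1.exp (fun y => rfl) (by unfold g; ring)

lemma hdmg {p : ℝ → ℝ} {d : ℝ} {t x : ℝ} (hp : HasDerivAt p d x) {q : ℝ → ℝ}
    (hq : ∀ y, q y = p y * g t y) {e : ℝ} (he : e = (d - (2*x+1)*t*(p x)) * g t x) :
    HasDerivAt q e x := by
  have h2 : q = fun y => p y * g t y := funext hq
  rw [h2, he]
  have h3 := hp.mul (hasDerivAt_g t x)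
  refine h3.congr_deriv ?_
  ring

lemma hdf0 (t x : ℝ) : HasDerivAt (f0 t) (f1 t x) x :=
  hdmg (hd_poly7 1 2 0 0 0 0 0 0 x) (fun y => by unfold f0; ring)
    (by unfold f1; ring)

lemma hdf1 (t x : ℝ) : HasDerivAt (f1 t) (f2 t x) x :=
  hdmg (hd_poly7 (2-t) (-4*t) (-4*t) 0 0 0 0 0 x) (fun y => by unfold f1; ring)
    (by unfold f2; ring)

lemma hdf2 (t x : ℝ) : HasDerivAt (f2 t) (f3 t x) x :=
  hdmg (hd_poly7 (-6*t+t^2) (-12*t+6*t^2) (12*t^2) (8*t^2) 0 0 0 0 x)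
    (fun y => by unfold f2; ring) (by unfold f3; ring)

lemma hdf3 (t x : ℝ) : HasDerivAt (f3 t) (f4 t x) x :=
  hdmg (hd_poly7 (-12*t+12*t^2-t^3) (48*t^2-8*t^3) (48*t^2-24*t^3) (-32*t^3) (-16*t^3) 0 0 0 x)
    (fun y => by unfold f3; ring) (by unfold f4; ring)

lemma hdf4 (t x : ℝ) : HasDerivAt (f4 t) (f5 t x) x :=
  hdmg (hd_poly7 (60*t^2-20*t^3+t^4) (120*t^2-120*t^3+10*t^4) (-240*t^3+40*t^4)
      (-160*t^3+80*t^4) (80*t^4) (32*t^4) 0 0 x)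
    (fun y => by unfold f4; ring) (by unfold f5; ring)

lemma hdf5 (t x : ℝ) : HasDerivAt (f5 t) (f6 t x) x :=
  hdmg (hd_poly7 (120*t^2-180*t^3+30*t^4-t^5) (-720*t^3+240*t^4-12*t^5)
      (-720*t^3+720*t^4-60*t^5) (960*t^4-160*t^5) (480*t^4-240*t^5) (-192*t^5) (-64*t^5) 0 x)
    (fun y => by unfold f5; ring) (by unfold f6; ring)

lemma hdG6 (t x : ℝ) : HasDerivAt (G6 t) (h6 t x) x :=
  hdmg (hd_poly7 (-t^5-54*t^4-852*t^3-4248*t^2) (-12*t^5-432*t^4-3408*t^3)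
      (-60*t^5-1296*t^4-3408*t^3) (-160*t^5-1728*t^4) (-240*t^5-864*t^4) (-192*t^5) (-64*t^5) 0 x)
    (fun y => by unfold G6; ring) (by unfold h6; ring)

lemma hdA0 {t : ℝ} (ht : t ≠ 0) (x : ℝ) : HasDerivAt (A0 t) (f0 t x) x :=
  hdmg (hd_poly7 (-(1/t)) 0 0 0 0 0 0 0 x) (fun y => by unfold A0; ring)
    (by unfold f0; field_simp; ring)

lemma hd_shift {q : ℝ → ℝ} {d : ℝ} (c x : ℝ) (h : HasDerivAt q d (x - c)) :
    HasDerivAt (fun y => q (y - c)) d x := by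
  have h2 := h.comp x ((hasDerivAt_id x).sub_const c)
  exact h2.congr_deriv (by simp)

lemma hdP1 (c x : ℝ) : HasDerivAt (fun y => P1 (y - c)) 1 x :=
  hd_shift c x (hd_congr (hd_poly7 (-(1/2)) 1 0 0 0 0 0 0 (x-c))
    (fun y => by unfold P1; ring) (by ring))

lemma hdP2 (c x : ℝ) : HasDerivAt (fun y => P2 (y - c)) (P1 (x - c)) x :=
  hd_shift c x (hd_congr (hd_poly7 (1/12) (-(1/2)) (1/2) 0 0 0 0 0 (x-c))
    (fun y => by unfold P2; ring) (by unfold P1; ring))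

lemma hdP3 (c x : ℝ) : HasDerivAt (fun y => P3 (y - c)) (P2 (x - c)) x :=
  hd_shift c x (hd_congr (hd_poly7 0 (1/12) (-(1/4)) (1/6) 0 0 0 0 (x-c))
    (fun y => by unfold P3; ring) (by unfold P2; ring))

lemma hdP4 (c x : ℝ) : HasDerivAt (fun y => P4 (y - c)) (P3 (x - c)) x :=
  hd_shift c x (hd_congr (hd_poly7 (-(1/720)) 0 (1/24) (-(1/12)) (1/24) 0 0 0 (x-c))
    (fun y => by unfold P4; ring) (by unfold P3; ring))

lemma hdP5 (c x : ℝ) : HasDerivAt (fun y => P5 (y - c)) (P4 (x - c)) x :=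
  hd_shift c x (hd_congr (hd_poly7 0 (-(1/720)) 0 (1/72) (-(1/48)) (1/120) 0 0 (x-c))
    (fun y => by unfold P5; ring) (by unfold P4; ring))

lemma hdP6 (c x : ℝ) : HasDerivAt (fun y => P6 (y - c)) (P5 (x - c)) x :=
  hd_shift c x (hd_congr (hd_poly7 (1/30240) 0 (-(1/1440)) 0 (1/288) (-(1/240)) (1/720) 0 (x-c))
    (fun y => by unfold P6; ring) (by unfold P5; ring))

lemma hdW (t c x : ℝ) : HasDerivAt (W t c) (f0 t x - P6 (x - c) * f6 t x) x := by
  have h := ((((((hdP1 c x).mul (hdf0 t x)).sub ((hdP2 c x).mul (hdf1 t x))).add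
    ((hdP3 c x).mul (hdf2 t x))).sub ((hdP4 c x).mul (hdf3 t x))).add
    ((hdP5 c x).mul (hdf4 t x))).sub ((hdP6 c x).mul (hdf5 t x))
  exact hd_congr h (fun y => by unfold W; simp only [Pi.mul_apply, Pi.sub_apply, Pi.add_apply]) (by ring)

lemma cont_f0 (t : ℝ) : Continuous (f0 t) := by unfold f0 g; fun_prop
lemma cont_f6 (t : ℝ) : Continuous (f6 t) := by unfold f6 g; fun_prop
lemma cont_h6 (t : ℝ) : Continuous (h6 t) := by unfold h6 g; fun_prop
lemma cont_P6f6 (t c : ℝ) : Continuous (fun x => P6 (x - c) * f6 t x) := by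
  unfold P6 f6 g; fun_prop

lemma W_left (t c : ℝ) :
    W t c c = -(f0 t c)/2 - (1/12) * f1 t c + (1/720) * f3 t c - (1/30240) * f5 t c := by
  unfold W P1 P2 P3 P4 P5 P6
  simp only [sub_self]
  ring

lemma W_right (t c : ℝ) :
    W t c (c+1) = (f0 t (c+1))/2 - (1/12) * f1 t (c+1) + (1/720) * f3 t (c+1)
      - (1/30240) * f5 t (c+1) := by
  unfold W P1 P2 P3 P4 P5 P6
  simp only [add_sub_cancel_left]
  ring

lemma tendsto_inner {t : ℝ} (ht : 0 < t) :
    Tendsto (fun x : ℝ => (x^2 + x) * t) atTop atTop := by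
  apply Tendsto.atTop_mul_const ht
  exact Tendsto.atTop_add_atTop (tendsto_pow_atTop two_ne_zero) tendsto_id

lemma tendsto_u_g {t : ℝ} (ht : 0 < t) (n : ℕ) :
    Tendsto (fun x : ℝ => (2*x+1)^n * g t x) atTop (𝓝 0) := by
  have key : Tendsto (fun y : ℝ => y^n * Real.exp (-y)) atTop (𝓝 0) :=
    tendsto_pow_mul_exp_neg_atTop_nhds_zero n
  have comp : Tendsto (fun x : ℝ => ((x^2+x)*t)^n * Real.exp (-((x^2+x)*t))) atTop (𝓝 0) :=
    key.comp (tendsto_inner ht)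
  have comp2 := comp.const_mul ((3/t)^n)
  rw [mul_zero] at comp2
  apply squeeze_zero_norm' ?_ comp2
  filter_upwards [eventually_ge_atTop 1] with x hx
  have hu : (0:ℝ) ≤ 2*x+1 := by linarith
  have hg : (0:ℝ) < g t x := Real.exp_pos _
  have h1 : ‖(2*x+1)^n * g t x‖ = (2*x+1)^n * g t x := by
    rw [Real.norm_eq_abs, abs_of_nonneg (mul_nonneg (pow_nonneg hu n) hg.le)]
  rw [h1]
  have h2 : (2*x+1)^n * g t x ≤ (3*(x^2+x))^n * g t x := by
    apply mul_le_mul_of_nonneg_right _ hg.le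
    exact pow_le_pow_left₀ hu (by nlinarith) n
  apply h2.trans
  apply le_of_eq
  have h3 : ((3:ℝ)*(x^2+x))^n = (3/t)^n * ((x^2+x)*t)^n := by
    rw [← mul_pow]
    congr 1
    field_simp
  unfold g
  rw [h3]
  ring

lemma tendsto_f0 {t : ℝ} (ht : 0 < t) : Tendsto (f0 t) atTop (𝓝 0) :=
  (tendsto_u_g ht 1).congr (fun x => by unfold f0; ring)

lemma tendsto_f1 {t : ℝ} (ht : 0 < t) : Tendsto (f1 t) atTop (𝓝 0) := by
  have h := ((tendsto_u_g ht 0).const_mul 2).sub ((tendsto_u_g ht 2).const_mul t)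
  rw [mul_zero, mul_zero, sub_zero] at h
  exact h.congr (fun x => by unfold f1; ring)

lemma tendsto_f3 {t : ℝ} (ht : 0 < t) : Tendsto (f3 t) atTop (𝓝 0) := by
  have h := (((tendsto_u_g ht 0).const_mul (-12*t)).add
    ((tendsto_u_g ht 2).const_mul (12*t^2))).add ((tendsto_u_g ht 4).const_mul (-(t^3)))
  simp only [mul_zero, add_zero] at h
  exact h.congr (fun x => by unfold f3; ring)

lemma tendsto_f5 {t : ℝ} (ht : 0 < t) : Tendsto (f5 t) atTop (𝓝 0) := by
  have h := ((((tendsto_u_g ht 0).const_mul (120*t^2)).add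
    ((tendsto_u_g ht 2).const_mul (-180*t^3))).add
    ((tendsto_u_g ht 4).const_mul (30*t^4))).add ((tendsto_u_g ht 6).const_mul (-(t^5)))
  simp only [mul_zero, add_zero] at h
  exact h.congr (fun x => by unfold f5; ring)

lemma tendsto_A0 {t : ℝ} (ht : 0 < t) : Tendsto (A0 t) atTop (𝓝 0) := by
  have h := (tendsto_u_g ht 0).const_mul (-(1/t))
  rw [mul_zero] at h
  exact h.congr (fun x => by unfold A0; ring)

lemma tendsto_G6 {t : ℝ} (ht : 0 < t) : Tendsto (G6 t) atTop (𝓝 0) := by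
  have h := ((((tendsto_u_g ht 6).const_mul (-(t^5))).add
    ((tendsto_u_g ht 4).const_mul (-54*t^4))).add
    ((tendsto_u_g ht 2).const_mul (-852*t^3))).add ((tendsto_u_g ht 0).const_mul (-4248*t^2))
  simp only [mul_zero, add_zero] at h
  exact h.congr (fun x => by unfold G6; ring)

lemma f0_nonneg {t : ℝ} (x : ℝ) (hx : (0:ℝ) ≤ x) : 0 ≤ f0 t x := by
  unfold f0
  exact mul_nonneg (by linarith) (Real.exp_pos _).le

lemma h6_nonneg {t : ℝ} (ht : 0 < t) (x : ℝ) (hx : (0:ℝ) ≤ x) : 0 ≤ h6 t x := by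
  unfold h6
  have hu : (0:ℝ) ≤ 2*x+1 := by linarith
  have h1 : (0:ℝ) ≤ 840*(2*x+1)*t^3 := by positivity
  have h2 : (0:ℝ) ≤ 420*(2*x+1)^3*t^4 := by positivity
  have h3 : (0:ℝ) ≤ 42*(2*x+1)^5*t^5 := by positivity
  have h4 : (0:ℝ) ≤ (2*x+1)^7*t^6 := by positivity
  exact mul_nonneg (by linarith) (Real.exp_pos _).le

lemma integrableOn_f0 {t : ℝ} (ht : 0 < t) : IntegrableOn (f0 t) (Ioi 0) :=
  integrableOn_Ioi_deriv_of_nonneg' (fun x _ => hdA0 ht.ne' x)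
    (fun x hx => f0_nonneg x (le_of_lt hx)) (tendsto_A0 ht)

lemma int_f0 {t : ℝ} (ht : 0 < t) : ∫ x in Ioi (0:ℝ), f0 t x = 1/t := by
  rw [integral_Ioi_of_hasDerivAt_of_nonneg' (fun x _ => hdA0 ht.ne' x)
    (fun x hx => f0_nonneg x (le_of_lt hx)) (tendsto_A0 ht)]
  unfold A0 g
  norm_num

lemma integrableOn_h6 {t : ℝ} (ht : 0 < t) : IntegrableOn (h6 t) (Ioi 0) :=
  integrableOn_Ioi_deriv_of_nonneg' (fun x _ => hdG6 t x)
    (fun x hx => h6_nonneg ht x (le_of_lt hx)) (tendsto_G6 ht)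

lemma int_h6 {t : ℝ} (ht : 0 < t) :
    ∫ x in Ioi (0:ℝ), h6 t x = t^5 + 54*t^4 + 852*t^3 + 4248*t^2 := by
  rw [integral_Ioi_of_hasDerivAt_of_nonneg' (fun x _ => hdG6 t x)
    (fun x hx => h6_nonneg ht x (le_of_lt hx)) (tendsto_G6 ht)]
  unfold G6 g
  norm_num

noncomputable def S (t : ℝ) (N : ℕ) : ℝ := ∑ k ∈ Finset.range N, f0 t k
noncomputable def B (t x : ℝ) : ℝ :=
  -(1/12) * f1 t x + (1/720) * f3 t x - (1/30240) * f5 t x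
noncomputable def R (t : ℝ) (k : ℕ) : ℝ := ∫ x in (k:ℝ)..((k:ℝ)+1), P6 (x - k) * f6 t x

lemma tendsto_B {t : ℝ} (ht : 0 < t) : Tendsto (B t) atTop (𝓝 0) := by
  have h := (((tendsto_f1 ht).const_mul (-(1/12))).add
    ((tendsto_f3 ht).const_mul (1/720))).sub ((tendsto_f5 ht).const_mul (1/30240))
  simp only [mul_zero, add_zero, sub_zero] at h
  exact h.congr (fun x => by unfold B; ring)

lemma step_k (t : ℝ) (k : ℕ) :
    ∫ x in (k:ℝ)..((k:ℝ)+1), f0 t x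
      = (f0 t ((k:ℝ)+1) + f0 t k)/2 + (B t ((k:ℝ)+1) - B t k) + R t k := by
  have hderiv : ∀ x ∈ Set.uIcc (k:ℝ) ((k:ℝ)+1),
      HasDerivAt (W t k) (f0 t x - P6 (x - k) * f6 t x) x := fun x _ => hdW t k x
  have hint : IntervalIntegrable (fun x => f0 t x - P6 (x - (k:ℝ)) * f6 t x)
      volume (k:ℝ) ((k:ℝ)+1) := ((cont_f0 t).sub (cont_P6f6 t k)).intervalIntegrable _ _
  have h := intervalIntegral.integral_eq_sub_of_hasDerivAt hderiv hint
  rw [intervalIntegral.integral_sub ((cont_f0 t).intervalIntegrable _ _)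
    ((cont_P6f6 t k).intervalIntegrable _ _), W_right, W_left] at h
  unfold B R
  linarith [h]

lemma master (t : ℝ) (N : ℕ) :
    ∫ x in (0:ℝ)..(N:ℝ), f0 t x
      = S t (N+1) - (f0 t 0 + f0 t N)/2 + B t N - B t 0 + ∑ k ∈ Finset.range N, R t k := by
  induction N with
  | zero =>
      simp [S]
  | succ n ih =>
      have hadj : ∫ x in (0:ℝ)..((n:ℝ)+1), f0 t x
          = (∫ x in (0:ℝ)..(n:ℝ), f0 t x) + ∫ x in (n:ℝ)..((n:ℝ)+1), f0 t x :=
        (intervalIntegral.integral_add_adjacent_intervals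
          ((cont_f0 t).intervalIntegrable _ _) ((cont_f0 t).intervalIntegrable _ _)).symm
      have hS : S t (n+1+1) = S t (n+1) + f0 t ((n:ℝ)+1) := by
        unfold S
        rw [Finset.sum_range_succ]
        push_cast
        ring
      push_cast
      rw [hadj, ih, step_k t n, Finset.sum_range_succ, hS]
      ring

lemma abs_P6_le {y : ℝ} (hy : y ∈ Icc (0:ℝ) 1) : |P6 y| ≤ 1 := by
  obtain ⟨h0, h1⟩ := hy
  have e2 : y^2 ≤ 1 := pow_le_one₀ h0 h1
  have e4 : y^4 ≤ 1 := pow_le_one₀ h0 h1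
  have e5 : y^5 ≤ 1 := pow_le_one₀ h0 h1
  have e6 : y^6 ≤ 1 := pow_le_one₀ h0 h1
  have p2 : 0 ≤ y^2 := by positivity
  have p4 : 0 ≤ y^4 := by positivity
  have p5 : 0 ≤ y^5 := by positivity
  have p6 : 0 ≤ y^6 := by positivity
  unfold P6
  rw [abs_le]
  constructor <;> nlinarith

lemma abs_f6_le {t : ℝ} (ht : 0 ≤ t) {x : ℝ} (hx : 0 ≤ x) : |f6 t x| ≤ h6 t x := by
  unfold f6 h6
  rw [abs_mul]
  have hg : |g t x| = g t x := abs_of_nonneg (Real.exp_pos _).le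
  rw [hg]
  apply mul_le_mul_of_nonneg_right _ (Real.exp_pos _).le
  have hu : (0:ℝ) ≤ 2*x+1 := by linarith
  have h1 : (0:ℝ) ≤ 840*(2*x+1)*t^3 := by positivity
  have h2 : (0:ℝ) ≤ 420*(2*x+1)^3*t^4 := by positivity
  have h3 : (0:ℝ) ≤ 42*(2*x+1)^5*t^5 := by positivity
  have h4 : (0:ℝ) ≤ (2*x+1)^7*t^6 := by positivity
  rw [abs_le]
  constructor <;> linarith

lemma abs_R_le {t : ℝ} (ht : 0 < t) (k : ℕ) :
    |R t k| ≤ ∫ x in (k:ℝ)..((k:ℝ)+1), h6 t x := by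
  have h1 : |R t k| ≤ ∫ x in (k:ℝ)..((k:ℝ)+1), |P6 (x - k) * f6 t x| :=
    intervalIntegral.abs_integral_le_integral_abs (by linarith)
  refine h1.trans (intervalIntegral.integral_mono_on (by linarith)
    ((cont_P6f6 t k).abs.intervalIntegrable _ _) ((cont_h6 t).intervalIntegrable _ _) ?_)
  intro x hx
  obtain ⟨ha, hb⟩ := hx
  have hx0 : (0:ℝ) ≤ x := le_trans (Nat.cast_nonneg k) ha
  rw [abs_mul]
  calc |P6 (x - k)| * |f6 t x| ≤ 1 * h6 t x := by
        apply mul_le_mul (abs_P6_le ⟨by linarith, by linarith⟩) (abs_f6_le ht.le hx0)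
          (abs_nonneg _) zero_le_one
    _ = h6 t x := one_mul _

lemma sum_R_le {t : ℝ} (ht : 0 < t) (N : ℕ) :
    |∑ k ∈ Finset.range N, R t k| ≤ ∫ x in (0:ℝ)..(N:ℝ), h6 t x := by
  induction N with
  | zero => simp
  | succ n ih =>
      have hadj : ∫ x in (0:ℝ)..((n:ℝ)+1), h6 t x
          = (∫ x in (0:ℝ)..(n:ℝ), h6 t x) + ∫ x in (n:ℝ)..((n:ℝ)+1), h6 t x :=
        (intervalIntegral.integral_add_adjacent_intervals
          ((cont_h6 t).intervalIntegrable _ _) ((cont_h6 t).intervalIntegrable _ _)).symm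
      rw [Finset.sum_range_succ]
      push_cast
      rw [hadj]
      have := abs_R_le ht n
      calc |(∑ k ∈ Finset.range n, R t k) + R t n|
          ≤ |∑ k ∈ Finset.range n, R t k| + |R t n| := abs_add_le _ _
        _ ≤ (∫ x in (0:ℝ)..(n:ℝ), h6 t x) + ∫ x in (n:ℝ)..((n:ℝ)+1), h6 t x := by
            exact add_le_add ih this

lemma intN_le_int {t : ℝ} (ht : 0 < t) (N : ℕ) :
    ∫ x in (0:ℝ)..(N:ℝ), h6 t x ≤ ∫ x in Ioi (0:ℝ), h6 t x := by
  rw [intervalIntegral.integral_of_le (Nat.cast_nonneg N)]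
  apply setIntegral_mono_set (integrableOn_h6 ht)
  · rw [EventuallyLE]
    apply (ae_restrict_iff' measurableSet_Ioi).2
    exact Eventually.of_forall (fun x hx => h6_nonneg ht x (le_of_lt hx))
  · exact HasSubset.Subset.eventuallyLE Ioc_subset_Ioi_self

lemma summable_f0 {t : ℝ} (ht : 0 < t) : Summable (fun k : ℕ => f0 t k) := by
  have hr1 : Real.exp (-t) < 1 := Real.exp_lt_one_iff.2 (by linarith)
  have hr : ‖Real.exp (-t)‖ < 1 := by
    rw [Real.norm_eq_abs, abs_of_pos (Real.exp_pos _)]; exact hr1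
  have h1 : Summable (fun k : ℕ => (k:ℝ) * Real.exp (-t)^k) := by
    simpa using summable_pow_mul_geometric_of_norm_lt_one 1 hr
  have h2 : Summable (fun k : ℕ => (2*(k:ℝ)+1) * Real.exp (-t)^k) := by
    have h3 := (h1.mul_left 2).add
      (summable_geometric_of_lt_one (Real.exp_pos _).le hr1)
    exact h3.congr (fun k => by ring)
  refine Summable.of_nonneg_of_le (fun (k : ℕ) => f0_nonneg (k:ℝ) (Nat.cast_nonneg k))
    (fun (k : ℕ) => ?_) h2
  unfold f0 g
  apply mul_le_mul_of_nonneg_left _ (by positivity)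
  rw [← Real.exp_nat_mul]
  apply Real.exp_le_exp.2
  have hk : (0:ℝ) ≤ (k:ℝ) := Nat.cast_nonneg k
  nlinarith

lemma main_bound {t : ℝ} (ht : 0 < t) (ht1 : t ≤ 1) :
    |(∑' k : ℕ, f0 t k) - (t⁻¹ + 1/3 + t/15)| ≤ 6000 * t^2 := by
  set F := ∑' k : ℕ, f0 t k with hF
  have hS : Tendsto (fun N => S t N) atTop (𝓝 F) :=
    (summable_f0 ht).hasSum.tendsto_sum_nat
  have hS1 : Tendsto (fun N => S t (N+1)) atTop (𝓝 F) :=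
    hS.comp (tendsto_add_atTop_nat 1)
  have hInt : Tendsto (fun N : ℕ => ∫ x in (0:ℝ)..(N:ℝ), f0 t x) atTop (𝓝 (1/t)) := by
    have := intervalIntegral_tendsto_integral_Ioi 0 (integrableOn_f0 ht)
      tendsto_natCast_atTop_atTop
    rwa [int_f0 ht] at this
  have hf0N : Tendsto (fun N : ℕ => f0 t N) atTop (𝓝 0) :=
    (tendsto_f0 ht).comp tendsto_natCast_atTop_atTop
  have hBN : Tendsto (fun N : ℕ => B t N) atTop (𝓝 0) :=
    (tendsto_B ht).comp tendsto_natCast_atTop_atTop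
  set L : ℝ := 1/t - F + (f0 t 0 + 0)/2 - 0 + B t 0 with hL
  have hRlim : Tendsto (fun N : ℕ => ∑ k ∈ Finset.range N, R t k) atTop (𝓝 L) := by
    have h := ((((hInt.sub hS1).add (((hf0N.const_add (f0 t 0))).div_const 2)).sub hBN).add
      (tendsto_const_nhds : Tendsto (fun _ : ℕ => B t 0) atTop (𝓝 (B t 0))))
    apply h.congr
    intro N
    have hm := master t N
    have hc : S t (N+1) = (fun N => S t (N+1)) N := rfl
    linarith [hm]
  have hLbound : |L| ≤ ∫ x in Ioi (0:ℝ), h6 t x := by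
    apply le_of_tendsto hRlim.abs
    filter_upwards with N
    exact (sum_R_le ht N).trans (intN_le_int ht N)
  have hHval : ∫ x in Ioi (0:ℝ), h6 t x ≤ 5155 * t^2 := by
    rw [int_h6 ht]
    have h2 : (0:ℝ) < t^2 := by positivity
    have h3 : t^3 ≤ t^2 := by nlinarith
    have h4 : t^4 ≤ t^2 := by nlinarith
    have h5 : t^5 ≤ t^2 := by nlinarith
    linarith
  have hf00 : f0 t 0 = 1 := by unfold f0 g; norm_num
  have hB0 : B t 0 = -(1/12)*(2-t) + (1/720)*(-12*t+12*t^2-t^3)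
      - (1/30240)*(120*t^2-180*t^3+30*t^4-t^5) := by
    unfold B f1 f3 f5 g
    norm_num
  have hFeq : F = 1/t + (f0 t 0 + 0)/2 - 0 + B t 0 - L := by rw [hL]; ring
  have habs : F - (t⁻¹ + 1/3 + t/15)
      = ((4:ℝ)/315*t^2 + 23/5040*t^3 - 1/1008*t^4 + 1/30240*t^5) - L := by
    rw [hFeq, hf00, hB0]
    rw [inv_eq_one_div]
    ring
  rw [habs]
  have hq : |(4:ℝ)/315*t^2 + 23/5040*t^3 - 1/1008*t^4 + 1/30240*t^5| ≤ t^2 := by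
    have h2 : 0 < t^2 := by positivity
    have h3 : t^3 ≤ t^2 := by nlinarith
    have h4 : t^4 ≤ t^2 := by nlinarith
    have h5 : t^5 ≤ t^2 := by nlinarith
    have p3 : 0 < t^3 := by positivity
    have p4 : 0 < t^4 := by positivity
    have p5 : 0 < t^5 := by positivity
    rw [abs_le]
    constructor <;> nlinarith
  calc |((4:ℝ)/315*t^2 + 23/5040*t^3 - 1/1008*t^4 + 1/30240*t^5) - L|
      ≤ |(4:ℝ)/315*t^2 + 23/5040*t^3 - 1/1008*t^4 + 1/30240*t^5| + |L| := abs_sub _ _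
    _ ≤ t^2 + 5155*t^2 := add_le_add hq (hLbound.trans hHval)
    _ ≤ 6000 * t^2 := by nlinarith

end ThetaAux


open ThetaAux in
/-- For `t → 0⁺`, `F(t) = Σ_{k=0}^∞ (2k+1) e^{-k(k+1)t}` satisfies
`F(t) = t⁻¹ + 1/3 + t/15 + O(t²)`. -/
theorem theta_sphere_asymptotic :
    (fun t : ℝ =>
        (∑' k : ℕ, (2 * (k : ℝ) + 1) * Real.exp (-((k : ℝ) * ((k : ℝ) + 1)) * t))
          - (t⁻¹ + 1 / 3 + t / 15))
      =O[𝓝[>] (0 : ℝ)] fun t : ℝ => t ^ 2 := by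
  rw [Asymptotics.isBigO_iff]
  refine ⟨6000, ?_⟩
  filter_upwards [Ioc_mem_nhdsGT_of_mem (Set.left_mem_Ico.2 one_pos)] with t htt
  obtain ⟨ht0, ht1⟩ := htt
  have hFeq : (∑' k : ℕ, (2 * (k:ℝ) + 1) * Real.exp (-((k:ℝ) * ((k:ℝ) + 1)) * t))
      = ∑' k : ℕ, f0 t k := by
    apply tsum_congr
    intro k
    unfold f0 g
    rw [show -(((k:ℝ)^2+(k:ℝ))*t) = -((k:ℝ)*((k:ℝ)+1))*t by ring]
  rw [hFeq, Real.norm_eq_abs, Real.norm_eq_abs, abs_of_nonneg (by positivity : (0:ℝ) ≤ t^2)]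
  exact main_bound ht0 ht1
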